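/- Exponential decay of the discrete heat semigroup: for the constant-coefficient periodic scheme with 0 < λa ≤ 1/4, if U has zero mean (∑_j U_j = 0) on the periodic grid of size N, then ‖S^n U‖₂ ≤ (1 − 4λa sin²(π/N))^n ‖U‖₂, so iterates of any zero-mean initial data converge to zero. -/

import Mathlib

open Finset Complex

namespace DiscreteHeat

variable {N : ℕ} [NeZero N]

/-- Discrete Fourier coefficient. -/
noncomputable def F (V : ZMod N → ℝ) (k : ZMod N) : ℂ :=
  ∑ j, ZMod.stdAddChar (j * k) * (V j : ℂ)

lemma conj_chi (x : ZMod N) :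
    (starRingEnd ℂ) (ZMod.stdAddChar x) = ZMod.stdAddChar (-x) := by
  rw [ZMod.stdAddChar_apply, ZMod.stdAddChar_apply, ← Circle.coe_inv_eq_conj,
    ← AddChar.map_neg_eq_inv]

lemma chi_orth (a : ZMod N) :
    ∑ k : ZMod N, ZMod.stdAddChar (k * a) = if a = 0 then (N : ℂ) else 0 := by
  simpa [ZMod.card] using AddChar.sum_mulShift a (ZMod.isPrimitive_stdAddChar N)

lemma conj_F (V : ZMod N → ℝ) (k : ZMod N) :
    (starRingEnd ℂ) (F V k) = ∑ i, ZMod.stdAddChar (-(i * k)) * (V i : ℂ) := by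
  simp [F, map_sum, conj_chi, Complex.conj_ofReal]

lemma parseval (V : ZMod N → ℝ) :
    ∑ k, Complex.normSq (F V k) = N * ∑ j, (V j) ^ 2 := by
  have key : ∑ k, (F V k * (starRingEnd ℂ) (F V k)) = (N : ℂ) * ∑ j, ((V j : ℂ)) ^ 2 := by
    have h1 : ∀ k : ZMod N, F V k * (starRingEnd ℂ) (F V k)
        = ∑ j, ∑ i, ZMod.stdAddChar (j * k - i * k) * ((V j : ℂ) * (V i : ℂ)) := by
      intro k
      rw [conj_F, F, Finset.sum_mul_sum]
      refine Finset.sum_congr rfl fun j _ => Finset.sum_congr rfl fun i _ => ?_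
      rw [sub_eq_add_neg, AddChar.map_add_eq_mul]
      ring
    calc ∑ k, (F V k * (starRingEnd ℂ) (F V k))
        = ∑ j, ∑ i, (∑ k : ZMod N, ZMod.stdAddChar (k * (j - i))) * ((V j : ℂ) * (V i : ℂ)) := by
          simp_rw [h1]
          rw [Finset.sum_comm]
          refine Finset.sum_congr rfl fun j _ => ?_
          rw [Finset.sum_comm]
          refine Finset.sum_congr rfl fun i _ => ?_
          rw [Finset.sum_mul]
          refine Finset.sum_congr rfl fun k _ => ?_
          congr 2
          ring
      _ = ∑ j, ∑ i, (if i = j then (N : ℂ) * ((V j : ℂ) * (V i : ℂ)) else 0) := by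
          refine Finset.sum_congr rfl fun j _ => Finset.sum_congr rfl fun i _ => ?_
          rw [chi_orth]
          by_cases h : i = j
          · simp [h]
          · have : j - i ≠ 0 := sub_ne_zero.mpr (Ne.symm h)
            simp [this, h]
      _ = (N : ℂ) * ∑ j, ((V j : ℂ)) ^ 2 := by
          rw [Finset.mul_sum]
          refine Finset.sum_congr rfl fun j _ => ?_
          rw [Finset.sum_ite_eq' Finset.univ j]
          simp [sq]
  have : ((∑ k, Complex.normSq (F V k) : ℝ) : ℂ) = ((N * ∑ j, (V j) ^ 2 : ℝ) : ℂ) := by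
    push_cast
    simpa [Complex.mul_conj] using key
  exact_mod_cast this

lemma F_shift (V : ZMod N → ℝ) (c k : ZMod N) :
    ∑ j, ZMod.stdAddChar (j * k) * (V (j + c) : ℂ)
      = ZMod.stdAddChar (-(c * k)) * F V k := by
  rw [F, Finset.mul_sum]
  refine Fintype.sum_equiv (Equiv.addRight c)
    (fun j => ZMod.stdAddChar (j * k) * (V (j + c) : ℂ))
    (fun j => ZMod.stdAddChar (-(c * k)) * (ZMod.stdAddChar (j * k) * (V j : ℂ))) ?_
  intro j
  simp only [Equiv.coe_addRight]
  rw [← mul_assoc, ← AddChar.map_add_eq_mul]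
  congr 2
  ring

/-- Symbol of the scheme on the `k`-th Fourier mode. -/
lemma F_S (μ : ℝ) (S : (ZMod N → ℝ) → ZMod N → ℝ)
    (hS : ∀ U j, S U j = U j + μ * (U (j + 1) - 2 * U j + U (j - 1)))
    (V : ZMod N → ℝ) (k : ZMod N) :
    F (S V) k = (1 + (μ : ℂ) * (ZMod.stdAddChar (-k) - 2 + ZMod.stdAddChar k)) * F V k := by
  have h1 : ∑ j, ZMod.stdAddChar (j * k) * (V (j + 1) : ℂ)
      = ZMod.stdAddChar (-k) * F V k := by
    simpa using F_shift V 1 k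
  have h2 : ∑ j, ZMod.stdAddChar (j * k) * (V (j + (-1)) : ℂ)
      = ZMod.stdAddChar k * F V k := by
    simpa using F_shift V (-1) k
  have expand : F (S V) k
      = ∑ j, (ZMod.stdAddChar (j * k) * (V j : ℂ)
          + (μ : ℂ) * (ZMod.stdAddChar (j * k) * (V (j + 1) : ℂ))
          - 2 * (μ : ℂ) * (ZMod.stdAddChar (j * k) * (V j : ℂ))
          + (μ : ℂ) * (ZMod.stdAddChar (j * k) * (V (j + (-1)) : ℂ))) := by
    rw [F]
    refine Finset.sum_congr rfl fun j _ => ?_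
    rw [hS]
    have : j - 1 = j + (-1) := by ring
    rw [this]
    push_cast
    ring
  rw [expand]
  simp only [Finset.sum_add_distrib, Finset.sum_sub_distrib, ← Finset.mul_sum]
  rw [h1, h2]
  rw [show (∑ j, ZMod.stdAddChar (j * k) * (V j : ℂ)) = F V k from rfl]
  ring

/-- The symbol is real: explicit formula. -/
lemma F_S_real (μ : ℝ) (S : (ZMod N → ℝ) → ZMod N → ℝ)
    (hS : ∀ U j, S U j = U j + μ * (U (j + 1) - 2 * U j + U (j - 1)))
    (V : ZMod N → ℝ) (k : ZMod N) :
    F (S V) k = ((1 - 4 * μ * Real.sin (Real.pi * k.val / N) ^ 2 : ℝ) : ℂ) * F V k := by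
  rw [F_S μ S hS V k]
  congr 1
  have hchi : ZMod.stdAddChar k = Complex.exp ((2 * Real.pi * k.val / N : ℝ) * Complex.I) := by
    rw [ZMod.stdAddChar_apply, ZMod.toCircle_apply]
    congr 1
    push_cast
    ring
  have hconj : ZMod.stdAddChar (-k) = (starRingEnd ℂ) (ZMod.stdAddChar k) := by
    rw [conj_chi]
  have hsum : ZMod.stdAddChar (-k) + ZMod.stdAddChar k
      = ((2 * Real.cos (2 * Real.pi * k.val / N) : ℝ) : ℂ) := by
    rw [hconj, add_comm, Complex.add_conj, hchi, Complex.exp_ofReal_mul_I_re]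
  have hcos : Real.cos (2 * Real.pi * k.val / N)
      = 1 - 2 * Real.sin (Real.pi * k.val / N) ^ 2 := by
    have h := Real.sin_sq_eq_half_sub (Real.pi * k.val / N)
    have h2 : 2 * (Real.pi * k.val / N) = 2 * Real.pi * k.val / N := by ring
    rw [h2] at h
    linarith
  have h3 : ZMod.stdAddChar (-k) - 2 + ZMod.stdAddChar k
      = (ZMod.stdAddChar (-k) + ZMod.stdAddChar k) - 2 := by ring
  rw [h3, hsum, hcos]
  push_cast
  ring

lemma sin_lower (hN : 2 ≤ N) {t : ℕ} (ht1 : 1 ≤ t) (ht2 : t < N) :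
    Real.sin (Real.pi / N) ≤ Real.sin (Real.pi * t / N) := by
  have hNpos : (0 : ℝ) < N := by positivity
  have hN2 : (2 : ℝ) ≤ N := by exact_mod_cast hN
  have key : ∀ u : ℕ, 1 ≤ u → 2 * u ≤ N →
      Real.sin (Real.pi / N) ≤ Real.sin (Real.pi * u / N) := by
    intro u hu1 hu2
    have hu1' : (1 : ℝ) ≤ u := by exact_mod_cast hu1
    have hu2' : (2 : ℝ) * u ≤ N := by exact_mod_cast hu2
    have ha : Real.pi / N ∈ Set.Icc (-(Real.pi / 2)) (Real.pi / 2) := by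
      constructor
      · have : (0:ℝ) ≤ Real.pi / N := by positivity
        have : (0:ℝ) ≤ Real.pi / 2 := by positivity
        linarith [div_nonneg Real.pi_pos.le hNpos.le]
      · rw [div_le_div_iff₀ hNpos (by norm_num : (0:ℝ) < 2)]
        nlinarith [Real.pi_pos]
    have hb : Real.pi * u / N ∈ Set.Icc (-(Real.pi / 2)) (Real.pi / 2) := by
      constructor
      · have h0 : (0:ℝ) ≤ Real.pi * u / N := by positivity
        have : (0:ℝ) ≤ Real.pi / 2 := by positivity
        linarith
      · rw [div_le_div_iff₀ hNpos (by norm_num : (0:ℝ) < 2)]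
        nlinarith [Real.pi_pos]
    have hle : Real.pi / N ≤ Real.pi * u / N := by
      rw [div_le_div_iff₀ hNpos hNpos]
      have h := mul_le_mul_of_nonneg_right
        (le_mul_of_one_le_right Real.pi_pos.le hu1') hNpos.le
      linarith [h]
    exact Real.strictMonoOn_sin.monotoneOn ha hb hle
  by_cases h : 2 * t ≤ N
  · exact key t ht1 h
  · push_neg at h
    have hu1 : 1 ≤ N - t := by omega
    have hu2 : 2 * (N - t) ≤ N := by omega
    have hcast : ((N - t : ℕ) : ℝ) = (N : ℝ) - t := Nat.cast_sub ht2.le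
    have heq : Real.sin (Real.pi * t / N) = Real.sin (Real.pi * (N - t : ℕ) / N) := by
      rw [hcast]
      rw [show Real.pi * ((N:ℝ) - t) / N = Real.pi - Real.pi * t / N by
        field_simp]
      rw [Real.sin_pi_sub]
    rw [heq]
    exact key (N - t) hu1 hu2

lemma eig_sq_le (hN : 2 ≤ N) {μ : ℝ} (hμ0 : 0 < μ) (hμ : μ ≤ 1/4)
    {k : ZMod N} (hk : k ≠ 0) :
    (1 - 4 * μ * Real.sin (Real.pi * k.val / N) ^ 2) ^ 2
      ≤ (1 - 4 * μ * Real.sin (Real.pi / N) ^ 2) ^ 2 := by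
  have hNpos : (0 : ℝ) < N := by positivity
  have hN1 : (1 : ℝ) ≤ N := by
    have : (2:ℝ) ≤ N := by exact_mod_cast hN
    linarith
  have ht1 : 1 ≤ k.val := Nat.one_le_iff_ne_zero.mpr fun h => hk ((ZMod.val_eq_zero k).mp h)
  have ht2 : k.val < N := ZMod.val_lt k
  set s1 := Real.sin (Real.pi / N) with hs1def
  set sk := Real.sin (Real.pi * k.val / N) with hskdef
  have hs1nn : 0 ≤ s1 := by
    apply Real.sin_nonneg_of_nonneg_of_le_pi
    · positivity
    · exact div_le_self Real.pi_pos.le hN1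
  have hle : s1 ≤ sk := sin_lower hN ht1 ht2
  have hsk1 : sk ^ 2 ≤ 1 := Real.sin_sq_le_one _
  have hsq : s1 ^ 2 ≤ sk ^ 2 := by nlinarith
  have h0 : 0 ≤ 1 - 4 * μ * sk ^ 2 := by nlinarith
  have h1 : 1 - 4 * μ * sk ^ 2 ≤ 1 - 4 * μ * s1 ^ 2 := by nlinarith
  nlinarith

lemma sum_shift (V : ZMod N → ℝ) (c : ZMod N) : ∑ j, V (j + c) = ∑ j, V j :=
  Fintype.sum_equiv (Equiv.addRight c) _ _ (fun _ => rfl)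

lemma mean_S (μ : ℝ) (S : (ZMod N → ℝ) → ZMod N → ℝ)
    (hS : ∀ U j, S U j = U j + μ * (U (j + 1) - 2 * U j + U (j - 1)))
    (V : ZMod N → ℝ) (hV : ∑ j, V j = 0) : ∑ j, S V j = 0 := by
  have e : ∀ j, S V j = (V j + μ * V (j + 1)) - 2 * μ * V j + μ * V (j + (-1)) := by
    intro j
    rw [hS]
    have h : j - 1 = j + (-1) := by ring
    rw [h]; ring
  rw [Finset.sum_congr rfl (fun j _ => e j), Finset.sum_add_distrib,
    Finset.sum_sub_distrib, Finset.sum_add_distrib, ← Finset.mul_sum, ← Finset.mul_sum,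
    ← Finset.mul_sum, sum_shift V 1, sum_shift V (-1), hV]
  ring

lemma mean_iter (μ : ℝ) (S : (ZMod N → ℝ) → ZMod N → ℝ)
    (hS : ∀ U j, S U j = U j + μ * (U (j + 1) - 2 * U j + U (j - 1)))
    (U : ZMod N → ℝ) (hU : ∑ j, U j = 0) (n : ℕ) : ∑ j, S^[n] U j = 0 := by
  induction n with
  | zero => simpa using hU
  | succ m ih =>
    rw [Function.iterate_succ_apply']
    exact mean_S μ S hS _ ih

lemma step (hN : 2 ≤ N) {μ : ℝ} (hμ0 : 0 < μ) (hμ : μ ≤ 1/4)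
    (S : (ZMod N → ℝ) → ZMod N → ℝ)
    (hS : ∀ U j, S U j = U j + μ * (U (j + 1) - 2 * U j + U (j - 1)))
    (V : ZMod N → ℝ) (hV : ∑ j, V j = 0) :
    ∑ j, (S V j) ^ 2 ≤ (1 - 4 * μ * Real.sin (Real.pi / N) ^ 2) ^ 2 * ∑ j, (V j) ^ 2 := by
  have hNpos : (0 : ℝ) < N := by positivity
  have hF0 : F V 0 = 0 := by
    have h : F V 0 = ((∑ j, V j : ℝ) : ℂ) := by
      rw [F]
      push_cast
      refine Finset.sum_congr rfl fun j _ => ?_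
      rw [mul_zero, AddChar.map_zero_eq_one, one_mul]
    rw [h, hV, Complex.ofReal_zero]
  have hterm : ∀ k : ZMod N, Complex.normSq (F (S V) k)
      ≤ (1 - 4 * μ * Real.sin (Real.pi / N) ^ 2) ^ 2 * Complex.normSq (F V k) := by
    intro k
    rw [F_S_real μ S hS V k, Complex.normSq_mul, Complex.normSq_ofReal, ← sq]
    by_cases hk : k = 0
    · simp [hk, hF0]
    · exact mul_le_mul_of_nonneg_right (eig_sq_le hN hμ0 hμ hk) (Complex.normSq_nonneg _)
  have hsum : ∑ k, Complex.normSq (F (S V) k)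
      ≤ (1 - 4 * μ * Real.sin (Real.pi / N) ^ 2) ^ 2 * ∑ k, Complex.normSq (F V k) := by
    rw [Finset.mul_sum]
    exact Finset.sum_le_sum fun k _ => hterm k
  rw [parseval (S V), parseval V] at hsum
  rw [mul_left_comm] at hsum
  exact le_of_mul_le_mul_left hsum hNpos

end DiscreteHeat

/-- Exponential decay of the discrete heat semigroup: for the constant
coefficient periodic scheme with `0 < μ ≤ 1/4` and zero-mean initial data,
the ℓ² norm contracts by the factor `1 − 4μ sin²(π/N)` at each step. -/
theorem discrete_heat_semigroup_decay
    (N : ℕ) (hN : 2 ≤ N) [NeZero N] (μ : ℝ) (hμ0 : 0 < μ) (hμ : μ ≤ 1 / 4)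
    (S : (ZMod N → ℝ) → ZMod N → ℝ)
    (hS : ∀ U j, S U j = U j + μ * (U (j + 1) - 2 * U j + U (j - 1)))
    (U : ZMod N → ℝ) (hmean : (∑ j, U j) = 0) (n : ℕ) :
    Real.sqrt (∑ j, (S^[n] U j) ^ 2) ≤
      (1 - 4 * μ * Real.sin (Real.pi / N) ^ 2) ^ n *
        Real.sqrt (∑ j, (U j) ^ 2) := by
  set c := 1 - 4 * μ * Real.sin (Real.pi / N) ^ 2 with hc
  have hc0 : 0 ≤ c := by
    have h1 : Real.sin (Real.pi / N) ^ 2 ≤ 1 := Real.sin_sq_le_one _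
    rw [hc]; nlinarith
  induction n with
  | zero => simp
  | succ n ih =>
    rw [Function.iterate_succ_apply']
    have hst := DiscreteHeat.step hN hμ0 hμ S hS (S^[n] U)
      (DiscreteHeat.mean_iter μ S hS U hmean n)
    have hs : Real.sqrt (∑ j, (S (S^[n] U) j) ^ 2)
        ≤ c * Real.sqrt (∑ j, (S^[n] U j) ^ 2) := by
      have h := Real.sqrt_le_sqrt hst
      rwa [Real.sqrt_mul (sq_nonneg c), Real.sqrt_sq hc0] at h
    calc Real.sqrt (∑ j, (S (S^[n] U) j) ^ 2)
        ≤ c * Real.sqrt (∑ j, (S^[n] U j) ^ 2) := hs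
      _ ≤ c * (c ^ n * Real.sqrt (∑ j, (U j) ^ 2)) := mul_le_mul_of_nonneg_left ih hc0
      _ = c ^ (n + 1) * Real.sqrt (∑ j, (U j) ^ 2) := by ring
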